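/- For the MGL distribution with fixed σ_j, σ_{j'} > 0 (j ≠ j'), the pairwise correlation ρ_{jj'}(a) given by formula (16) tends to 0 as a → ∞. In particular, lim_{a→∞} [ B(a+σ_j+σ_{j'},a)/B(a+σ_j,a+σ_{j'}) − 1 ] = 0. -/

import Mathlib

open Real MeasureTheory Filter

/-- Beta function as an integral. -/
noncomputable def betaFn (m n : ℝ) : ℝ := ∫ t in (0:ℝ)..1, t ^ (m - 1) * (1 - t) ^ (n - 1)

/-- Pairwise correlation of the MGL distribution (formula (16)), as a function of a. -/
noncomputable def mglCorr (σj σj' a : ℝ) : ℝ :=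
  (betaFn (a + σj + σj') a / betaFn (a + σj) (a + σj') - 1) /
    Real.sqrt
      ((betaFn (a + 2 * σj) a * betaFn (1/2 - 2 * σj) (1/2) /
          (betaFn (a + σj) (a + σj) * betaFn (1/2 - σj) (1/2 - σj)) - 1) *
       (betaFn (a + 2 * σj') a * betaFn (1/2 - 2 * σj') (1/2) /
          (betaFn (a + σj') (a + σj') * betaFn (1/2 - σj') (1/2 - σj')) - 1))

/-! ### Auxiliary lemmas -/

/-- Identification of `betaFn` with the Gamma-function formula. -/
lemma betaFn_eq {m n : ℝ} (hm : 0 < m) (hn : 0 < n) :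
    betaFn m n = Real.Gamma m * Real.Gamma n / Real.Gamma (m + n) := by
  have key : ((betaFn m n : ℝ) : ℂ) = Complex.betaIntegral m n := by
    rw [betaFn, Complex.betaIntegral, ← intervalIntegral.integral_ofReal]
    apply intervalIntegral.integral_congr
    intro t ht
    rw [Set.uIcc_of_le (by norm_num : (0:ℝ) ≤ 1)] at ht
    obtain ⟨h0, h1⟩ := ht
    simp only []
    rw [Complex.ofReal_mul, Complex.ofReal_cpow h0,
      Complex.ofReal_cpow (by linarith : (0:ℝ) ≤ 1 - t)]
    push_cast
    ring
  have h2 : Complex.Gamma ((m:ℂ) + (n:ℂ)) ≠ 0 := by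
    rw [← Complex.ofReal_add, Complex.Gamma_ofReal]
    exact_mod_cast (Real.Gamma_pos_of_pos (by linarith : (0:ℝ) < m + n)).ne'
  have h3 := Complex.Gamma_mul_Gamma_eq_betaIntegral
    (s := (m:ℂ)) (t := (n:ℂ)) (by simpa using hm) (by simpa using hn)
  have h4 : ((betaFn m n : ℝ) : ℂ) = ((Real.Gamma m * Real.Gamma n / Real.Gamma (m+n) : ℝ) : ℂ) := by
    rw [Complex.ofReal_div, Complex.ofReal_mul, ← Complex.Gamma_ofReal m, ← Complex.Gamma_ofReal n,
      ← Complex.Gamma_ofReal (m+n), Complex.ofReal_add, key, eq_div_iff h2, mul_comm, ← h3]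
  exact_mod_cast h4

lemma betaFn_pos {m n : ℝ} (hm : 0 < m) (hn : 0 < n) : 0 < betaFn m n := by
  rw [betaFn_eq hm hn]
  exact div_pos (mul_pos (Real.Gamma_pos_of_pos hm) (Real.Gamma_pos_of_pos hn))
    (Real.Gamma_pos_of_pos (by linarith))

lemma betaFn_symm {m n : ℝ} (hm : 0 < m) (hn : 0 < n) : betaFn m n = betaFn n m := by
  rw [betaFn_eq hm hn, betaFn_eq hn hm, add_comm]; ring

/-- Wendel-type upper bound `Γ(a+σ) ≤ Γ(a)·a^σ` from log-convexity. -/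
lemma gamma_upper {σ a : ℝ} (hσ0 : 0 ≤ σ) (hσ1 : σ ≤ 1) (ha : 0 < a) :
    Real.Gamma (a + σ) ≤ Real.Gamma a * a ^ σ := by
  have hc := Real.convexOn_log_Gamma
  have h := hc.2 (Set.mem_Ioi.mpr ha) (Set.mem_Ioi.mpr (by linarith : (0:ℝ) < a + 1))
    (by linarith : (0:ℝ) ≤ 1 - σ) hσ0 (by ring)
  simp only [smul_eq_mul, Function.comp_apply] at h
  have harg : (1 - σ) * a + σ * (a + 1) = a + σ := by ring
  rw [harg, Real.Gamma_add_one ha.ne', Real.log_mul ha.ne'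
    (Real.Gamma_pos_of_pos ha).ne'] at h
  have h2 : Real.log (Real.Gamma (a + σ)) ≤ Real.log (Real.Gamma a) + σ * Real.log a := by
    nlinarith
  calc Real.Gamma (a + σ) = Real.exp (Real.log (Real.Gamma (a + σ))) :=
        (Real.exp_log (Real.Gamma_pos_of_pos (by linarith))).symm
    _ ≤ Real.exp (Real.log (Real.Gamma a) + σ * Real.log a) := Real.exp_le_exp.mpr h2
    _ = Real.Gamma a * a ^ σ := by
        rw [Real.exp_add, Real.exp_log (Real.Gamma_pos_of_pos ha),
          Real.rpow_def_of_pos ha, mul_comm (Real.log a) σ]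

/-- Wendel-type lower bound `Γ(a)·a ≤ Γ(a+σ)·(a+σ)^(1-σ)` from log-convexity. -/
lemma gamma_lower {σ a : ℝ} (hσ0 : 0 ≤ σ) (hσ1 : σ ≤ 1) (ha : 0 < a) :
    Real.Gamma a * a ≤ Real.Gamma (a + σ) * (a + σ) ^ (1 - σ) := by
  have hc := Real.convexOn_log_Gamma
  have haσ : (0:ℝ) < a + σ := by linarith
  have h := hc.2 (Set.mem_Ioi.mpr haσ) (Set.mem_Ioi.mpr (by linarith : (0:ℝ) < a + σ + 1))
    hσ0 (by linarith : (0:ℝ) ≤ 1 - σ) (by ring)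
  simp only [smul_eq_mul, Function.comp_apply] at h
  have harg : σ * (a + σ) + (1 - σ) * (a + σ + 1) = a + 1 := by ring
  rw [harg, Real.Gamma_add_one ha.ne', Real.Gamma_add_one haσ.ne',
    Real.log_mul ha.ne' (Real.Gamma_pos_of_pos ha).ne',
    Real.log_mul haσ.ne' (Real.Gamma_pos_of_pos haσ).ne'] at h
  have h2 : Real.log a + Real.log (Real.Gamma a) ≤
      Real.log (Real.Gamma (a + σ)) + (1 - σ) * Real.log (a + σ) := by nlinarith
  calc Real.Gamma a * a = Real.exp (Real.log a + Real.log (Real.Gamma a)) := by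
        rw [Real.exp_add, Real.exp_log ha, Real.exp_log (Real.Gamma_pos_of_pos ha)]; ring
    _ ≤ Real.exp (Real.log (Real.Gamma (a + σ)) + (1 - σ) * Real.log (a + σ)) :=
        Real.exp_le_exp.mpr h2
    _ = Real.Gamma (a + σ) * (a + σ) ^ (1 - σ) := by
        rw [Real.exp_add, Real.exp_log (Real.Gamma_pos_of_pos haσ),
          Real.rpow_def_of_pos haσ, mul_comm (Real.log (a + σ)) (1 - σ)]

/-- The normalized Gamma ratio `Γ(a+σ)/(Γ(a)·a^σ)`. -/
noncomputable def gRatio (σ a : ℝ) : ℝ := Real.Gamma (a + σ) / (Real.Gamma a * a ^ σ)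

/-- `Γ(a+σ)/(Γ(a)·a^σ) → 1` as `a → ∞`. -/
lemma tendsto_gRatio {σ : ℝ} (hσ0 : 0 ≤ σ) (hσ1 : σ ≤ 1) :
    Tendsto (fun a => gRatio σ a) atTop (nhds 1) := by
  have hbase : Tendsto (fun a : ℝ => a / (a + σ)) atTop (nhds 1) := by
    have h1 : Tendsto (fun a : ℝ => σ / (a + σ)) atTop (nhds 0) :=
      Tendsto.div_atTop tendsto_const_nhds (tendsto_atTop_add_const_right _ σ tendsto_id)
    have h2 := (tendsto_const_nhds (x := (1:ℝ)) (f := atTop)).sub h1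
    rw [sub_zero] at h2
    apply h2.congr'
    filter_upwards [eventually_gt_atTop (0:ℝ)] with a ha
    have : a + σ ≠ 0 := by positivity
    field_simp
    ring
  have hlow : Tendsto (fun a : ℝ => (a / (a + σ)) ^ (1 - σ)) atTop (nhds 1) := by
    have := hbase.rpow_const (p := 1 - σ) (Or.inr (by linarith))
    simpa using this
  refine tendsto_of_tendsto_of_tendsto_of_le_of_le' hlow tendsto_const_nhds ?_ ?_
  · filter_upwards [eventually_gt_atTop (0:ℝ)] with a ha
    have haσ : (0:ℝ) < a + σ := by linarith
    have hΓa := Real.Gamma_pos_of_pos ha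
    have hrp : (0:ℝ) < a ^ σ := Real.rpow_pos_of_pos ha σ
    rw [gRatio, Real.div_rpow ha.le haσ.le,
      div_le_div_iff₀ (Real.rpow_pos_of_pos haσ _) (by positivity)]
    have key : a ^ (1 - σ) * (Real.Gamma a * a ^ σ) = Real.Gamma a * a := by
      rw [mul_comm (Real.Gamma a) (a ^ σ), ← mul_assoc, ← Real.rpow_add ha]
      simp [mul_comm]
    rw [key]
    exact gamma_lower hσ0 hσ1 ha
  · filter_upwards [eventually_gt_atTop (0:ℝ)] with a ha
    have hΓa := Real.Gamma_pos_of_pos ha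
    rw [gRatio, div_le_one (by positivity)]
    exact gamma_upper hσ0 hσ1 ha

/-- Algebraic identity for the beta ratio. -/
lemma betaFn_ratio {σ σ' a : ℝ} (hσ : 0 < σ) (hσ' : 0 < σ') (ha : 0 < a) :
    betaFn (a + σ + σ') a / betaFn (a + σ) (a + σ') =
      gRatio (σ + σ') a / (gRatio σ a * gRatio σ' a) := by
  have h1 : betaFn (a + σ + σ') a =
      Real.Gamma (a + σ + σ') * Real.Gamma a / Real.Gamma (a + σ + (a + σ')) := by
    rw [betaFn_eq (by linarith) ha]; congr 2; ring
  have h2 : betaFn (a + σ) (a + σ') =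
      Real.Gamma (a + σ) * Real.Gamma (a + σ') / Real.Gamma (a + σ + (a + σ')) := by
    rw [betaFn_eq (by linarith) (by linarith)]
  have h3 : gRatio (σ + σ') a = Real.Gamma (a + σ + σ') / (Real.Gamma a * a ^ (σ + σ')) := by
    rw [gRatio, show a + (σ + σ') = a + σ + σ' from by ring]
  have hG : ∀ x : ℝ, 0 < x → Real.Gamma x ≠ 0 := fun x hx => (Real.Gamma_pos_of_pos hx).ne'
  have g1 := hG a ha
  have g2 := hG (a + σ) (by linarith)
  have g3 := hG (a + σ') (by linarith)
  have g4 := hG (a + σ + σ') (by linarith)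
  have g5 := hG (a + σ + (a + σ')) (by linarith)
  have p1 : a ^ σ ≠ 0 := (Real.rpow_pos_of_pos ha σ).ne'
  have p2 : a ^ σ' ≠ 0 := (Real.rpow_pos_of_pos ha σ').ne'
  have p3 : a ^ (σ + σ') ≠ 0 := (Real.rpow_pos_of_pos ha _).ne'
  have hadd : a ^ (σ + σ') = a ^ σ * a ^ σ' := Real.rpow_add ha σ σ'
  rw [h1, h2, h3, gRatio, gRatio]
  field_simp
  rw [hadd]

/-- The beta ratio tends to 1. -/
lemma tendsto_betaFn_ratio {σ σ' : ℝ} (hσ : 0 < σ) (hσ' : 0 < σ') (h1 : σ + σ' ≤ 1) :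
    Tendsto (fun a => betaFn (a + σ + σ') a / betaFn (a + σ) (a + σ')) atTop (nhds 1) := by
  have h := (tendsto_gRatio (by linarith : (0:ℝ) ≤ σ + σ') h1).div
    ((tendsto_gRatio hσ.le (by linarith)).mul (tendsto_gRatio hσ'.le (by linarith)))
    (by norm_num)
  rw [show (1:ℝ) / (1 * 1) = 1 by norm_num] at h
  apply h.congr'
  filter_upwards [eventually_gt_atTop (0:ℝ)] with a ha
  exact (betaFn_ratio hσ hσ' ha).symm

lemma betaIntegrable {x y : ℝ} (hx : 0 < x) (hy : 0 < y) :
    IntervalIntegrable (fun t : ℝ => t ^ (x - 1) * (1 - t) ^ (y - 1)) volume 0 1 := by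
  have hC := Complex.betaIntegral_convergent (u := (x:ℂ)) (v := (y:ℂ))
    (by simpa using hx) (by simpa using hy)
  rw [intervalIntegrable_iff] at hC ⊢
  have heq : Set.EqOn (fun t : ℝ => ((t ^ (x - 1) * (1 - t) ^ (y - 1) : ℝ) : ℂ))
      (fun t : ℝ => (t:ℂ) ^ ((x:ℂ) - 1) * (1 - (t:ℂ)) ^ ((y:ℂ) - 1)) (Set.uIoc (0:ℝ) 1) := by
    intro t ht
    rw [Set.uIoc_of_le (by norm_num : (0:ℝ) ≤ 1)] at ht
    simp only []
    rw [Complex.ofReal_mul, Complex.ofReal_cpow ht.1.le,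
      Complex.ofReal_cpow (by linarith [ht.2] : (0:ℝ) ≤ 1 - t)]
    push_cast
    ring
  have h2 : IntegrableOn (fun t : ℝ => ((t ^ (x - 1) * (1 - t) ^ (y - 1) : ℝ) : ℂ))
      (Set.uIoc (0:ℝ) 1) volume := hC.congr_fun heq.symm measurableSet_uIoc
  have h3 := h2.re
  simp at h3 ⊢; exact h3

lemma amgm_sq {A B C : ℝ} (hA : 0 ≤ A) (hB : 0 ≤ B) (hC : 0 ≤ C) (h : C ^ 2 = A * B) :
    2 * C ≤ A + B := by nlinarith [sq_nonneg (A - B), sq_nonneg (A + B - 2 * C)]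

lemma amgm_sq_strict {A B C : ℝ} (hA : 0 < A) (hB : 0 < B) (hC : 0 ≤ C) (h : C ^ 2 = A * B)
    (hne : A ≠ B) : 2 * C < A + B := by
  rcases lt_or_gt_of_ne hne with h1 | h1 <;>
  nlinarith [sq_nonneg (A - B), sq_nonneg (A + B - 2 * C)]

lemma rpow_prod_sq {t p q : ℝ} (ht : 0 < t) (ht1 : t < 1) :
    (t ^ ((p + q) / 2) * (1 - t) ^ ((p + q) / 2)) ^ 2 =
      (t ^ p * (1 - t) ^ q) * ((t ^ q) * (1 - t) ^ p) := by
  have h1t : (0:ℝ) < 1 - t := by linarith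
  rw [mul_pow, sq, sq, ← Real.rpow_add ht, ← Real.rpow_add h1t,
    show (t ^ p * (1 - t) ^ q) * ((t ^ q) * (1 - t) ^ p)
      = (t ^ p * t ^ q) * ((1-t) ^ q * (1-t) ^ p) from by ring,
    ← Real.rpow_add ht, ← Real.rpow_add h1t]
  ring_nf

lemma amgm_pt {t p q : ℝ} (ht : 0 < t) (ht1 : t < 1) :
    2 * (t ^ ((p + q) / 2) * (1 - t) ^ ((p + q) / 2)) ≤
      t ^ p * (1 - t) ^ q + t ^ q * (1 - t) ^ p := by
  have h1t : (0:ℝ) < 1 - t := by linarith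
  exact amgm_sq (by positivity) (by positivity) (by positivity) (rpow_prod_sq ht ht1)

lemma amgm_pt_strict {t p q : ℝ} (ht : 1/2 < t) (ht1 : t < 1) (hpq : p < q) :
    2 * (t ^ ((p + q) / 2) * (1 - t) ^ ((p + q) / 2)) <
      t ^ p * (1 - t) ^ q + t ^ q * (1 - t) ^ p := by
  have ht0 : (0:ℝ) < t := by linarith
  have h1t : (0:ℝ) < 1 - t := by linarith
  refine amgm_sq_strict (by positivity) (by positivity) (by positivity)
    (rpow_prod_sq ht0 ht1) ?_
  have hlt : t ^ (p - q) < (1 - t) ^ (p - q) :=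
    Real.rpow_lt_rpow_of_neg h1t (by linarith) (by linarith)
  have hA : t ^ p * (1 - t) ^ q = t ^ (p - q) * (t ^ q * (1 - t) ^ q) := by
    rw [← mul_assoc, ← Real.rpow_add ht0]; ring_nf
  have hB : t ^ q * (1 - t) ^ p = (1 - t) ^ (p - q) * (t ^ q * (1 - t) ^ q) := by
    rw [show (1-t) ^ (p-q) * (t ^ q * (1-t) ^ q)
      = t ^ q * ((1-t) ^ (p-q) * (1-t) ^ q) from by ring, ← Real.rpow_add h1t]; ring_nf
  rw [hA, hB]
  have hpos : (0:ℝ) < t ^ q * (1 - t) ^ q := by positivity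
  exact ne_of_lt (mul_lt_mul_of_pos_right hlt hpos)

/-- Strict Beta inequality: `B(1/2-σ, 1/2-σ) < B(1/2-2σ, 1/2)` for `0 < σ < 1/4`. -/
lemma betaFn_lt {σ : ℝ} (hσ : 0 < σ) (hσ4 : σ < 1/4) :
    betaFn (1/2 - σ) (1/2 - σ) < betaFn (1/2 - 2*σ) (1/2) := by
  set p : ℝ := 1/2 - 2*σ - 1 with hp
  set q : ℝ := (1/2:ℝ) - 1 with hq
  have hpq : p < q := by rw [hp, hq]; linarith
  have hexp : (1/2 - σ) - 1 = (p + q) / 2 := by rw [hp, hq]; ring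
  set u : ℝ → ℝ := fun t => t ^ p * (1 - t) ^ q with hu
  set v : ℝ → ℝ := fun t => t ^ q * (1 - t) ^ p with hv
  set w : ℝ → ℝ := fun t => t ^ ((p + q)/2) * (1 - t) ^ ((p + q)/2) with hw
  have Iu : IntervalIntegrable u volume 0 1 := betaIntegrable (by linarith) (by norm_num)
  have Iv : IntervalIntegrable v volume 0 1 := by
    have := betaIntegrable (x := 1/2) (y := 1/2 - 2*σ) (by norm_num) (by linarith)
    convert this using 2
  have Iw : IntervalIntegrable w volume 0 1 := by
    have := betaIntegrable (x := 1/2 - σ) (y := 1/2 - σ) (by linarith) (by linarith)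
    simp only [hexp] at this
    exact this
  set F : ℝ → ℝ := fun t => u t + v t - 2 * w t with hF
  have IF : IntervalIntegrable F volume 0 1 := (Iu.add Iv).sub (Iw.const_mul 2)
  have hF0 : ∀ t ∈ Set.Icc (0:ℝ) 1, 0 ≤ F t := by
    intro t ht
    rcases eq_or_lt_of_le ht.1 with h0 | h0
    · have hpne : p ≠ 0 := by rw [hp]; intro h; linarith [h]
      have hqne : q ≠ 0 := by rw [hq]; norm_num
      have hrne : (p + q)/2 ≠ 0 := by rw [hp, hq]; intro h; nlinarith [h]
      simp only [hF, hu, hv, hw, ← h0, Real.zero_rpow hpne, Real.zero_rpow hqne,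
        Real.zero_rpow hrne, zero_mul, mul_zero, sub_zero]
      norm_num
    · rcases eq_or_lt_of_le ht.2 with h1 | h1
      · have hpn : p < 0 := by rw [hp]; linarith
        have hqn : q < 0 := by rw [hq]; norm_num
        have hrn : (p + q)/2 ≠ 0 := by rw [hp, hq]; intro h; nlinarith [h]
        simp only [hF, hu, hv, hw, h1, sub_self, Real.zero_rpow hpn.ne,
          Real.zero_rpow hqn.ne, Real.zero_rpow hrn, mul_zero, zero_mul, sub_zero]
        norm_num
      · have := amgm_pt (p := p) (q := q) h0 h1
        simp only [hF, hu, hv, hw]; linarith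
  have key : 0 < ∫ t in (0:ℝ)..1, F t := by
    have hF1 : IntervalIntegrable F volume 0 (1/2) :=
      IF.mono_set (by rw [Set.uIcc_of_le, Set.uIcc_of_le] <;> norm_num
                      <;> exact Set.Icc_subset_Icc (le_refl _) (by norm_num))
    have hF2 : IntervalIntegrable F volume (1/2) 1 :=
      IF.mono_set (by rw [Set.uIcc_of_le, Set.uIcc_of_le] <;> norm_num
                      <;> exact Set.Icc_subset_Icc (by norm_num) (le_refl _))
    rw [← intervalIntegral.integral_add_adjacent_intervals hF1 hF2]
    have h1 : 0 ≤ ∫ t in (0:ℝ)..(1/2), F t :=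
      intervalIntegral.integral_nonneg (by norm_num)
        (fun x hx => hF0 x ⟨hx.1, by linarith [hx.2]⟩)
    have h2 : 0 < ∫ t in (1/2:ℝ)..1, F t := by
      apply intervalIntegral.intervalIntegral_pos_of_pos_on hF2 _ (by norm_num)
      intro x hx
      have := amgm_pt_strict (p := p) (q := q) hx.1 hx.2 hpq
      simp only [hF, hu, hv, hw]; linarith
    linarith
  have e1 : betaFn (1/2 - 2*σ) (1/2) = ∫ t in (0:ℝ)..1, u t := rfl
  have e2 : betaFn (1/2) (1/2 - 2*σ) = ∫ t in (0:ℝ)..1, v t := rfl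
  have e3 : betaFn (1/2 - σ) (1/2 - σ) = ∫ t in (0:ℝ)..1, w t := by
    rw [betaFn, hexp]
  have e4 : betaFn (1/2) (1/2 - 2*σ) = betaFn (1/2 - 2*σ) (1/2) :=
    betaFn_symm (by norm_num) (by linarith)
  have hsum : (∫ t in (0:ℝ)..1, F t) =
      (∫ t in (0:ℝ)..1, u t) + (∫ t in (0:ℝ)..1, v t) - 2 * ∫ t in (0:ℝ)..1, w t := by
    rw [hF]
    rw [intervalIntegral.integral_sub (Iu.add Iv) (Iw.const_mul 2),
      intervalIntegral.integral_add Iu Iv, intervalIntegral.integral_const_mul]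
  rw [hsum, ← e1, ← e2, ← e3, e4] at key
  linarith

/-- The variance factor tends to a limit strictly greater than 1. -/
lemma tendsto_varFactor {σ : ℝ} (hσ : 0 < σ) (hσ4 : σ < 1/4) :
    ∃ c : ℝ, 1 < c ∧ Tendsto (fun a => betaFn (a + 2 * σ) a * betaFn (1/2 - 2 * σ) (1/2) /
      (betaFn (a + σ) (a + σ) * betaFn (1/2 - σ) (1/2 - σ))) atTop (nhds c) := by
  set B₁ : ℝ := betaFn (1/2 - 2 * σ) (1/2) with hB1
  set B₂ : ℝ := betaFn (1/2 - σ) (1/2 - σ) with hB2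
  have hB2pos : 0 < B₂ := betaFn_pos (by linarith) (by linarith)
  have hlt : B₂ < B₁ := betaFn_lt hσ hσ4
  refine ⟨B₁ / B₂, (one_lt_div hB2pos).mpr hlt, ?_⟩
  have hr : Tendsto (fun a => betaFn (a + σ + σ) a / betaFn (a + σ) (a + σ)) atTop (nhds 1) :=
    tendsto_betaFn_ratio hσ hσ (by linarith)
  have h := hr.mul (tendsto_const_nhds (x := B₁ / B₂) (f := atTop))
  rw [one_mul] at h
  apply h.congr
  intro a
  rw [div_mul_div_comm, show a + σ + σ = a + 2 * σ from by ring]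

/-- The MGL pairwise correlation tends to 0 as a → ∞; in particular the covariance
factor B(a+σ_j+σ_{j'},a)/B(a+σ_j,a+σ_{j'}) − 1 tends to 0. -/
theorem mgl_corr_tendsto_zero (σj σj' : ℝ)
    (hσj : 0 < σj) (hσj4 : σj < 1/4) (hσj' : 0 < σj') (hσj'4 : σj' < 1/4) :
    Tendsto (fun a : ℝ => mglCorr σj σj' a) atTop (nhds 0) ∧
    Tendsto (fun a : ℝ => betaFn (a + σj + σj') a / betaFn (a + σj) (a + σj') - 1)
      atTop (nhds 0) := by
  have hN : Tendsto (fun a : ℝ => betaFn (a + σj + σj') a / betaFn (a + σj) (a + σj') - 1)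
      atTop (nhds 0) := by
    have := (tendsto_betaFn_ratio hσj hσj' (by linarith)).sub
      (tendsto_const_nhds (x := (1:ℝ)) (f := atTop))
    simpa using this
  refine ⟨?_, hN⟩
  obtain ⟨cj, hcj, hj⟩ := tendsto_varFactor hσj hσj4
  obtain ⟨cj', hcj', hj'⟩ := tendsto_varFactor hσj' hσj'4
  have hD : Tendsto (fun a : ℝ =>
      (betaFn (a + 2 * σj) a * betaFn (1/2 - 2 * σj) (1/2) /
          (betaFn (a + σj) (a + σj) * betaFn (1/2 - σj) (1/2 - σj)) - 1) *
       (betaFn (a + 2 * σj') a * betaFn (1/2 - 2 * σj') (1/2) /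
          (betaFn (a + σj') (a + σj') * betaFn (1/2 - σj') (1/2 - σj')) - 1))
      atTop (nhds ((cj - 1) * (cj' - 1))) :=
    (hj.sub tendsto_const_nhds).mul (hj'.sub tendsto_const_nhds)
  have hL : (0:ℝ) < (cj - 1) * (cj' - 1) := mul_pos (by linarith) (by linarith)
  have hsqrt := hD.sqrt
  have hne : Real.sqrt ((cj - 1) * (cj' - 1)) ≠ 0 := (Real.sqrt_pos.mpr hL).ne'
  have h := hN.div hsqrt hne
  rw [zero_div] at h
  exact h
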